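/- There is a bijection between prime tropical ideals of T[x₁^{±1},…,x_n^{±1}] and prime tropical ideals of T[x₁,…,x_n] not containing a monomial, given by I ↦ I ∩ T[x₁,…,x_n] with inverse J ↦ J·T[x₁^{±1},…,x_n^{±1}]. -/

import Mathlib

/-- The tropical semifield `𝕋 = (ℝ ∪ {-∞}, max, +)`, realized as
`Tropical (WithTop (OrderDual ℝ))`: tropical addition is `max` and tropical
multiplication is ordinary addition of reals, `0 = -∞`. -/
abbrev T : Type := Tropical (WithTop (OrderDual ℝ))

/-- The tropical Laurent polynomial semiring `T[x₁^{±1},…,x_n^{±1}]`. -/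
abbrev TLaur (n : ℕ) : Type := AddMonoidAlgebra T (Fin n → ℤ)

/-- The tropical polynomial semiring `T[x₁,…,x_n]`. -/
abbrev TPoly (n : ℕ) : Type := AddMonoidAlgebra T (Fin n → ℕ)

/-- View an element of a monomial-algebra over `T` as a finitely supported function. -/
def toF {G : Type} (f : AddMonoidAlgebra T G) : G →₀ T := f.coeff

/-- The twisted product of pairs over a commutative semiring. -/
def tw {R : Type*} [CommSemiring R] (α β : R × R) : R × R :=
  (α.1 * β.1 + α.2 * β.2, α.1 * β.2 + α.2 * β.1)

/-- A congruence is prime if it is proper and whenever the twisted product of two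
pairs lies in it, one of the pairs lies in it. -/
def IsPrimeCon {R : Type*} [CommSemiring R] (C : RingCon R) : Prop :=
  (∃ a b : R, ¬ C a b) ∧
    ∀ α β : R × R, C (tw α β).1 (tw α β).2 → C α.1 α.2 ∨ C β.1 β.2

/-- The monomial-elimination (valuated matroid circuit) axiom for an ideal:
whenever a monomial `x^u` occurs in `f, g ∈ I` with the same nonzero coefficient,
there is `h ∈ I` not involving `x^u` whose coefficients satisfy
`c_v(h) ≤ c_v(f) + c_v(g)` (tropical `+` is `max`), with equality when `c_v(f) ≠ c_v(g)`. -/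
def IsTropicalIdeal {G : Type} [AddCommMonoid G] (I : Set (AddMonoidAlgebra T G)) : Prop :=
  ∀ f ∈ I, ∀ g ∈ I, ∀ u : G,
    toF f u ≠ 0 → toF f u = toF g u →
      ∃ h ∈ I, toF h u = 0 ∧ ∀ v : G, v ≠ u →
        (toF h v + (toF f v + toF g v) = toF f v + toF g v) ∧
        (toF f v ≠ toF g v → toF h v = toF f v + toF g v)

/-- The inclusion `T[x₁,…,x_n] →+* T[x₁^{±1},…,x_n^{±1}]`. -/
noncomputable def incl (n : ℕ) : TPoly n →+* TLaur n :=
  AddMonoidAlgebra.mapDomainRingHom T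
    (AddMonoidHom.mk' (fun u : Fin n → ℕ => fun i => (u i : ℤ))
      (by intro a b; funext i; simp))

/-- `J` contains no monomial (no single term with nonzero coefficient). -/
def NoMonomial {n : ℕ} (J : Ideal (TPoly n)) : Prop :=
  ∀ (u : Fin n → ℕ) (c : T), c ≠ 0 →
    (AddMonoidAlgebra.ofCoeff (Finsupp.single u c : (Fin n → ℕ) →₀ T) : TPoly n) ∉ J

/-!
`T[x₁^{±1},…,x_n^{±1}]` is the localization of `T[x₁,…,x_n]` at the monoid of monomials: every
Laurent polynomial becomes a polynomial after multiplication by a monomial, and monomials with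
nonzero coefficient are units since `T` is a semifield. The prime part of the correspondence is
therefore the usual one between primes of a localization and primes disjoint from the
multiplicative set, and "disjoint from the monomials" is exactly `NoMonomial`.

The elimination axiom only involves coefficients, so it is transported along any injective
reindexing of exponents. Restriction preserves it because the eliminant `h` of two polynomials
is dominated by their sum, hence again a polynomial; extension preserves it because any two
elements of `J·T[x^{±1}]` are the images of two elements of `J` under one common monomial shift.
-/

open AddMonoidAlgebra Function

namespace AddMonoidAlgebra

variable {R M N : Type*} [Semiring R]

theorem exists_mapDomain_eq_of_support_subset {f : M → N} (hf : Injective f)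
    {x : AddMonoidAlgebra R N} (hx : ↑x.coeff.support ⊆ Set.range f) :
    ∃ y, mapDomain f y = x :=
  ⟨ofCoeff (x.coeff.comapDomain f hf.injOn), by
    ext1; rw [coeff_mapDomain]; exact Finsupp.mapDomain_comapDomain f hf _ hx⟩

theorem mapDomain_add_right_eq_mul_single [AddGroup M] (x : AddMonoidAlgebra R M) (g : M) :
    mapDomain (· + g) x = x * single g 1 := by
  ext v
  rw [coeff_mul_single_apply, mul_one, coeff_mapDomain,
    ← Finsupp.mapDomain_apply (add_left_injective g) x.coeff (v + -g), neg_add_cancel_right]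

theorem isUnit_single [AddGroup M] (g : M) {r : R} (hr : IsUnit r) : IsUnit (single g r) :=
  have : IsUnit (r, Multiplicative.ofAdd g) := Prod.isUnit_iff.2 ⟨hr, Group.isUnit _⟩
  this.map singleHom

end AddMonoidAlgebra

theorem Tropical.isUnit_of_ne_zero {R : Type*} [LinearOrderedAddCommGroupWithTop R]
    {c : Tropical R} (hc : c ≠ 0) : IsUnit c := by
  have hc' : Tropical.untrop c ≠ ⊤ := fun h => hc (Tropical.untrop_injective h)
  refine IsUnit.of_mul_eq_one (Tropical.trop (-Tropical.untrop c)) (Tropical.untrop_injective ?_)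
  simp [LinearOrderedAddCommGroupWithTop.add_neg_cancel_of_ne_top hc']

theorem IsLocalization.exists_mul_eq_algebraMap_of_mem_map₂ {R S : Type*} [CommSemiring R]
    [CommSemiring S] [Algebra R S] {M : Submonoid R} [IsLocalization M S] {I : Ideal R} {x y : S}
    (hx : x ∈ I.map (algebraMap R S)) (hy : y ∈ I.map (algebraMap R S)) :
    ∃ m ∈ M, ∃ a ∈ I, ∃ b ∈ I,
      x * algebraMap R S m = algebraMap R S a ∧ y * algebraMap R S m = algebraMap R S b := by
  obtain ⟨⟨⟨a, ha⟩, ⟨s, hs⟩⟩, hxa⟩ := (mem_map_algebraMap_iff M S).1 hx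
  obtain ⟨⟨⟨b, hb⟩, ⟨t, ht⟩⟩, hyb⟩ := (mem_map_algebraMap_iff M S).1 hy
  refine ⟨s * t, M.mul_mem hs ht, a * t, I.mul_mem_right t ha, b * s, I.mul_mem_right s hb,
    ?_, ?_⟩
  · rw [map_mul, map_mul, ← mul_assoc, hxa]
  · rw [map_mul, map_mul, mul_comm (algebraMap R S s), ← mul_assoc, hyb]

section Laurent

variable (R : Type*) [CommSemiring R] (ι : Type*)

def natCastExponent : (ι → ℕ) →+ (ι → ℤ) := AddMonoidHom.compLeft (Nat.castAddMonoidHom ℤ) ι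

variable {ι} in
theorem natCastExponent_injective : Injective (natCastExponent ι) :=
  fun _ _ h => funext fun i => Nat.cast_injective (congrFun h i)

-- For `ι = Fin n`, `algebraMap` is `incl n` by definition.
noncomputable instance : Algebra (AddMonoidAlgebra R (ι → ℕ)) (AddMonoidAlgebra R (ι → ℤ)) :=
  (mapDomainRingHom R (natCastExponent ι)).toAlgebra

noncomputable def monomials : Submonoid (AddMonoidAlgebra R (ι → ℕ)) :=
  MonoidHom.mrange (of R (ι → ℕ))

variable {R ι}

theorem mem_monomials {x : AddMonoidAlgebra R (ι → ℕ)} :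
    x ∈ monomials R ι ↔ ∃ u, single u 1 = x := by
  simp [monomials, Multiplicative.exists]

theorem algebraMap_eq_mapDomain (p : AddMonoidAlgebra R (ι → ℕ)) :
    algebraMap _ (AddMonoidAlgebra R (ι → ℤ)) p = mapDomain (natCastExponent ι) p :=
  rfl

theorem algebraMap_single (u : ι → ℕ) (r : R) :
    algebraMap _ (AddMonoidAlgebra R (ι → ℤ)) (single u r) = single (natCastExponent ι u) r :=
  mapDomain_single

theorem exists_mul_single_eq_algebraMap (z : AddMonoidAlgebra R (ι → ℤ)) :
    ∃ (w : ι → ℕ) (p : AddMonoidAlgebra R (ι → ℕ)),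
      z * single (natCastExponent ι w) 1 = algebraMap _ _ p := by
  classical
  let w : ι → ℕ := fun i => z.coeff.support.sup fun v => (-v i).toNat
  refine ⟨w, (exists_mapDomain_eq_of_support_subset natCastExponent_injective
    fun v hv => ?_).imp fun _ => Eq.symm⟩
  rw [Finset.mem_coe, Finsupp.mem_support_iff, coeff_mul_single_apply, mul_one,
    ← Finsupp.mem_support_iff] at hv
  have hle : ∀ i, (-(v i - w i)).toNat ≤ w i := fun i =>
    Finset.le_sup (f := fun v : ι → ℤ => (-v i).toNat) hv
  refine ⟨fun i => (v i).toNat, funext fun i => Int.toNat_of_nonneg ?_⟩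
  have := hle i
  omega

instance isLocalization_monomials :
    IsLocalization (monomials R ι) (AddMonoidAlgebra R (ι → ℤ)) where
  map_units := by
    rintro ⟨_, hx⟩
    obtain ⟨u, rfl⟩ := mem_monomials.1 hx
    rw [algebraMap_single]
    exact isUnit_single _ isUnit_one
  surj z := by
    obtain ⟨w, p, hp⟩ := exists_mul_single_eq_algebraMap z
    exact ⟨(p, ⟨_, mem_monomials.2 ⟨w, rfl⟩⟩), by rwa [algebraMap_single]⟩
  exists_of_eq h := ⟨1, congrArg _ (mapDomain_injective natCastExponent_injective h)⟩

end Laurent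

theorem toF_mapDomain {G H : Type} (φ : G → H) (f : AddMonoidAlgebra T G) :
    toF (mapDomain φ f) = Finsupp.mapDomain φ (toF f) :=
  coeff_mapDomain φ f

namespace IsTropicalIdeal

variable {G H : Type} [AddCommMonoid G] [AddCommMonoid H] {φ : G → H}

theorem image_mapDomain (hφ : Injective φ) {S : Set (AddMonoidAlgebra T G)}
    (hS : IsTropicalIdeal S) : IsTropicalIdeal (mapDomain φ '' S) := by
  rintro _ ⟨f, hf, rfl⟩ _ ⟨g, hg, rfl⟩ u hfu hfgu
  simp only [toF_mapDomain] at hfu hfgu ⊢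
  obtain ⟨u, rfl⟩ : u ∈ Set.range φ := by
    by_contra hu
    exact hfu (Finsupp.mapDomain_of_notMem_range _ _ hu)
  simp only [Finsupp.mapDomain_apply hφ] at hfu hfgu
  obtain ⟨h, hh, hhu, hhv⟩ := hS f hf g hg u hfu hfgu
  refine ⟨mapDomain φ h, ⟨h, hh, rfl⟩, ?_, fun v hv => ?_⟩
  · rwa [toF_mapDomain, Finsupp.mapDomain_apply hφ]
  rw [toF_mapDomain]
  by_cases hvφ : v ∈ Set.range φ
  · obtain ⟨v, rfl⟩ := hvφ
    simp only [Finsupp.mapDomain_apply hφ]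
    exact hhv v (ne_of_apply_ne φ hv)
  · simp [Finsupp.mapDomain_of_notMem_range _ _ hvφ]

theorem preimage_mapDomain (hφ : Injective φ) {S : Set (AddMonoidAlgebra T H)}
    (hS : IsTropicalIdeal S) : IsTropicalIdeal (mapDomain φ ⁻¹' S) := by
  intro f hf g hg u hfu hfgu
  obtain ⟨h, hh, hhu, hhv⟩ := hS _ hf _ hg (φ u)
    (by rwa [toF_mapDomain, Finsupp.mapDomain_apply hφ])
    (by simpa only [toF_mapDomain, Finsupp.mapDomain_apply hφ])
  -- `h` is dominated by `f + g`, which vanishes off the range of `φ`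
  have hsupp : ↑(toF h).support ⊆ Set.range φ := by
    intro v hv
    by_contra hvφ
    have := (hhv v fun hvu => hvφ ⟨u, hvu.symm⟩).1
    simp only [toF_mapDomain, Finsupp.mapDomain_of_notMem_range _ _ hvφ, add_zero] at this
    exact (Finsupp.mem_support_iff.1 hv) this
  obtain ⟨h, rfl⟩ := exists_mapDomain_eq_of_support_subset hφ hsupp
  refine ⟨h, hh, by rwa [toF_mapDomain, Finsupp.mapDomain_apply hφ] at hhu, fun v hv => ?_⟩
  simpa only [toF_mapDomain, Finsupp.mapDomain_apply hφ] using hhv (φ v) (hφ.ne hv)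

theorem of_forall_exists_subset {S : Set (AddMonoidAlgebra T G)}
    (hS : ∀ f ∈ S, ∀ g ∈ S, ∃ S' ⊆ S, f ∈ S' ∧ g ∈ S' ∧ IsTropicalIdeal S') :
    IsTropicalIdeal S := by
  intro f hf g hg u hfu hfgu
  obtain ⟨S', hS'S, hf', hg', hS'⟩ := hS f hf g hg
  obtain ⟨h, hh, hhu⟩ := hS' f hf' g hg' u hfu hfgu
  exact ⟨h, hS'S hh, hhu⟩

theorem map_algebraMap {ι : Type} {J : Ideal (AddMonoidAlgebra T (ι → ℕ))}
    (hJ : IsTropicalIdeal (J : Set (AddMonoidAlgebra T (ι → ℕ)))) :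
    IsTropicalIdeal ((J.map (algebraMap _ (AddMonoidAlgebra T (ι → ℤ))) : Ideal _) :
      Set (AddMonoidAlgebra T (ι → ℤ))) := by
  refine of_forall_exists_subset fun f hf g hg => ?_
  obtain ⟨_, hm, F, hF, G, hG, hfF, hgG⟩ :=
    IsLocalization.exists_mul_eq_algebraMap_of_mem_map₂ (M := monomials T ι) hf hg
  obtain ⟨w, rfl⟩ := mem_monomials.1 hm
  rw [algebraMap_single] at hfF hgG
  set c := natCastExponent ι w
  have hshift {x : AddMonoidAlgebra T (ι → ℤ)} {X : AddMonoidAlgebra T (ι → ℕ)}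
      (h : x * single c 1 = algebraMap _ _ X) :
      mapDomain (· + -c) (mapDomain (natCastExponent ι) X) = x := by
    rw [mapDomain_add_right_eq_mul_single, ← algebraMap_eq_mapDomain, ← h, mul_assoc,
      single_mul_single, add_neg_cancel, mul_one, ← one_def, mul_one]
  refine ⟨mapDomain (· + -c) '' (mapDomain (natCastExponent ι) '' J), ?_,
    ⟨_, ⟨F, hF, rfl⟩, hshift hfF⟩, ⟨_, ⟨G, hG, rfl⟩, hshift hgG⟩,
    (hJ.image_mapDomain natCastExponent_injective).image_mapDomain (add_left_injective _)⟩
  rintro _ ⟨_, ⟨X, hX, rfl⟩, rfl⟩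
  rw [mapDomain_add_right_eq_mul_single, ← algebraMap_eq_mapDomain]
  exact Ideal.mul_mem_right _ _ (Ideal.mem_map_of_mem _ hX)

end IsTropicalIdeal

theorem NoMonomial.disjoint_monomials {n : ℕ} {J : Ideal (TPoly n)} (hJ : NoMonomial J) :
    Disjoint (monomials T (Fin n) : Set (TPoly n)) J :=
  Set.disjoint_left.2 fun _ hx hxJ => by
    obtain ⟨u, rfl⟩ := mem_monomials.1 hx
    exact hJ u 1 one_ne_zero hxJ

theorem noMonomial_comap_incl {n : ℕ} {I : Ideal (TLaur n)} (hI : I ≠ ⊤) :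
    NoMonomial (I.comap (incl n)) := fun u c hc hu =>
  hI (I.eq_top_of_isUnit_mem hu <| (algebraMap_single u c).symm ▸
    isUnit_single _ (Tropical.isUnit_of_ne_zero hc))

/-- The maps `I ↦ I ∩ T[x₁,…,x_n]` and `J ↦ J·T[x₁^{±1},…,x_n^{±1}]` are mutually
inverse bijections between the prime tropical ideals of the Laurent polynomial
semiring and the prime tropical ideals of the polynomial semiring containing no
monomial. -/
theorem prime_tropical_ideal_correspondence (n : ℕ) :
    (∀ I : Ideal (TLaur n), I.IsPrime → IsTropicalIdeal (I : Set (TLaur n)) →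
      (Ideal.comap (incl n) I).IsPrime ∧
      IsTropicalIdeal ((Ideal.comap (incl n) I : Ideal (TPoly n)) : Set (TPoly n)) ∧
      NoMonomial (Ideal.comap (incl n) I) ∧
      Ideal.map (incl n) (Ideal.comap (incl n) I) = I) ∧
    (∀ J : Ideal (TPoly n), J.IsPrime → IsTropicalIdeal (J : Set (TPoly n)) →
      NoMonomial J →
      (Ideal.map (incl n) J).IsPrime ∧
      IsTropicalIdeal ((Ideal.map (incl n) J : Ideal (TLaur n)) : Set (TLaur n)) ∧
      Ideal.comap (incl n) (Ideal.map (incl n) J) = J) := by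
  let M := monomials T (Fin n)
  refine ⟨fun I hI hIt => ⟨Ideal.comap_isPrime (incl n) I,
    hIt.preimage_mapDomain natCastExponent_injective, noMonomial_comap_incl hI.ne_top,
    IsLocalization.map_under M (TLaur n) I⟩, fun J hJ hJt hJm => ?_⟩
  have hd := hJm.disjoint_monomials
  exact ⟨IsLocalization.isPrime_of_isPrime_disjoint M _ J hJ hd, hJt.map_algebraMap,
    IsLocalization.under_map_of_isPrime_disjoint M _ hJ hd⟩
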